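/- For every prime p, the identity of formal power series over ℤ holds: (Σ_{k≥0} f_3(p^k)·X^k) · (1 − p·X³) · (1 − X)³ = (1 − X²)². Equivalently, the local factor at p of the subring zeta function of ℤ³ is ζ_p(3s−1)·ζ_p(s)³ / ζ_p(2s)², where ζ_p(s) = (1 − p^{−s})^{−1}. -/

import Mathlib

open scoped BigOperators

/-- The number of subrings with identity of `ℤ^n` (componentwise operations)
of additive index `k`. -/
noncomputable def numSubrings (n k : ℕ) : ℕ :=
  Nat.card {S : Subring (Fin n → ℤ) // S.toAddSubgroup.index = k}

/-- The number of irreducible subrings of `ℤ^n` of index `p ^ e`: subrings of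
additive index `p ^ e` all of whose elements have all coordinates congruent
modulo `p`. -/
noncomputable def numIrrSubrings (n p e : ℕ) : ℕ :=
  Nat.card {S : Subring (Fin n → ℤ) //
    S.toAddSubgroup.index = p ^ e ∧
    ∀ x ∈ S, ∀ i j : Fin n, (p : ℤ) ∣ x i - x j}

/-- An integer matrix is in Hermite normal form if it is upper triangular and
`0 ≤ a i j < a i i` for `i < j`. -/
def IsHermiteNormalForm {n : ℕ} (A : Matrix (Fin n) (Fin n) ℤ) : Prop :=
  (∀ i j : Fin n, j < i → A i j = 0) ∧
  ∀ i j : Fin n, i < j → 0 ≤ A i j ∧ A i j < A i i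

/-- A subring matrix is a matrix in Hermite normal form such that the all-ones
vector lies in the ℤ-span of its columns and the componentwise product of any
two columns lies in the ℤ-span of its columns. -/
def IsSubringMatrix {n : ℕ} (A : Matrix (Fin n) (Fin n) ℤ) : Prop :=
  IsHermiteNormalForm A ∧
  (1 : Fin n → ℤ) ∈ Set.range A.mulVec ∧
  ∀ j k : Fin n, (fun i => A i j * A i k) ∈ Set.range A.mulVec

/-- For a composition `α` of length `m`, the number of `(m+1) × (m+1)` subring
matrices with diagonal `(p ^ α 0, …, p ^ α (m-1), 1)`, all entries of the first
`m` columns divisible by `p`, and last column `(1,…,1)ᵀ`. -/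
noncomputable def gComp (p : ℕ) {m : ℕ} (α : Fin m → ℕ) : ℕ :=
  Nat.card {A : Matrix (Fin (m + 1)) (Fin (m + 1)) ℤ //
    IsSubringMatrix A ∧
    (∀ i : Fin m, A i.castSucc i.castSucc = (p : ℤ) ^ α i) ∧
    (∀ i : Fin (m + 1), ∀ j : Fin m, (p : ℤ) ∣ A i j.castSucc) ∧
    ∀ i : Fin (m + 1), A i (Fin.last m) = 1}

/-!
The map `x ↦ (x₀ - x₂, x₁ - x₂)` identifies unital subrings of `ℤ³` with non-unital subrings
of `ℤ²` of the same index, because its kernel `ℤ · 1` lies in every subring. An additive subgroup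
of `ℤ²` of index `m` has a unique Hermite basis `(d₁, c), (0, d₂)` with `d₁ d₂ = m` and
`0 ≤ c < d₂`, and it is closed under multiplication iff `d₂ ∣ c (c - d₁)`. For `m = p ^ k` write
`N(a, b)` for the number of admissible `c` when `d₁ = p ^ a`, `d₂ = p ^ b`. Every admissible `c`
is then divisible by `p` as soon as `a, b ≥ 1`, whence `N(a + 1, b + 2) = p N(a, b)`, while
`N(0, b + 1) = 2`, `N(a + 1, 1) = 1` and `N(a, 0) = 1`. Summing over `a` gives
`f₃(p ^ (k + 3)) = p f₃(p ^ k) + 4` with `f₃(1), f₃(p), f₃(p²) = 1, 3, 4`, and this recurrence is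
the stated identity of power series.
-/

open Finset PowerSeries

theorem AddSubgroup.index_eq_index_map_fst_mul_index_comap_inr {A B : Type*} [AddCommGroup A]
    [AddCommGroup B] (H : AddSubgroup (A × B)) :
    H.index = (H.map (AddMonoidHom.fst A B)).index * (H.comap (AddMonoidHom.inr A B)).index := by
  set K := (AddMonoidHom.fst A B).ker
  have hK : K = (⊤ : AddSubgroup B).map (AddMonoidHom.inr A B) := by
    ext ⟨a, b⟩; simp [K, AddSubgroup.mem_prod, eq_comm]
  have hmap : (H.map (AddMonoidHom.fst A B)).index = (H ⊔ K).index := by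
    rw [index_map, AddMonoidHom.range_eq_top_of_surjective _ Prod.fst_surjective, index_top,
      mul_one]
  have hcomap : (H.comap (AddMonoidHom.inr A B)).index = H.relIndex K := by
    rw [← relIndex_top_right, relIndex_comap, hK]
  rw [hmap, hcomap, ← relIndex_sup_left, mul_comm, relIndex_mul_index le_sup_left]

theorem Int.addSubgroup_eq_zmultiples_index (K : AddSubgroup ℤ) :
    K = AddSubgroup.zmultiples (K.index : ℤ) := by
  obtain ⟨a, rfl⟩ := Int.subgroup_cyclic K
  rw [← AddSubgroup.zmultiples_eq_closure, Int.index_zmultiples, Int.zmultiples_natAbs]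

theorem Nat.count_mul_of_periodic {P : ℕ → Prop} [DecidablePred P] {e : ℕ}
    (hP : Function.Periodic P e) (n : ℕ) : Nat.count P (e * n) = n * Nat.count P e := by
  induction n with
  | zero => simp
  | succ n ih =>
    rw [mul_add_one, Nat.count_add, ih, add_one_mul]
    congr 2
    ext k
    rw [add_comm, mul_comm]; exact iff_of_eq (hP.nat_mul n k)

theorem Nat.count_mul_of_dvd {P : ℕ → Prop} [DecidablePred P] {q : ℕ} (hq : 0 < q)
    (hP : ∀ c, P c → q ∣ c) (n : ℕ) : Nat.count P (q * n) = Nat.count (fun c => P (q * c)) n := by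
  have h : {c ∈ range (q * n) | P c} =
      {c ∈ range n | P (q * c)}.map ⟨(q * ·), mul_right_injective₀ hq.ne'⟩ := by
    ext x
    simp only [mem_filter, mem_range, mem_map, Function.Embedding.coeFn_mk]
    constructor
    · rintro ⟨hx, hPx⟩
      obtain ⟨y, rfl⟩ := hP x hPx
      exact ⟨y, ⟨lt_of_mul_lt_mul_left hx q.zero_le, hPx⟩, rfl⟩
    · rintro ⟨y, ⟨hy, hPy⟩, rfl⟩
      exact ⟨Nat.mul_lt_mul_of_pos_left hy hq, hPy⟩
  simp only [Nat.count_eq_card_filter_range, h, card_map]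

theorem Prime.dvd_of_dvd_mul_sub {R : Type*} [CommRing R] {p c d : R} (hp : Prime p)
    (hd : p ∣ d) (h : p ∣ c * (c - d)) : p ∣ c := by
  rcases hp.dvd_or_dvd h with h | h
  · exact h
  · simpa using dvd_add h hd

theorem PowerSeries.mk_mul_one_sub_C_mul_X_pow {R : Type*} [CommRing R] (f : ℕ → R) (q : R)
    (j : ℕ) : mk f * (1 - C q * X ^ j) = mk fun n => f n - if j ≤ n then q * f (n - j) else 0 := by
  ext n
  rw [mul_sub, mul_one, ← mul_assoc, map_sub, coeff_mul_X_pow', coeff_mul_C]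
  simp [mul_comm]

theorem PowerSeries.mk_mul_eq_of_recurrence {R : Type*} [CommRing R] {f : ℕ → R} {q : R}
    (h₀ : f 0 = 1) (h₁ : f 1 = 3) (h₂ : f 2 = 4) (h : ∀ k, f (k + 3) = q * f k + 4) :
    mk f * (1 - C q * X ^ 3) * (1 - X) ^ 3 = (1 - X ^ 2) ^ 2 := by
  have step₁ :
      mk f * (1 - C q * X ^ 3) = mk fun n => if n = 0 then 1 else if n = 1 then 3 else 4 := by
    rw [mk_mul_one_sub_C_mul_X_pow]
    congr 1; funext n
    rcases n with _ | _ | _ | n <;> simp [h₀, h₁, h₂, h]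
  have step₂ : (mk fun n : ℕ => if n = 0 then (1 : R) else if n = 1 then 3 else 4) * (1 - X) =
      (1 + X) ^ 2 := by
    rw [show (1 - X : R⟦X⟧) = 1 - C 1 * X ^ 1 by simp, mk_mul_one_sub_C_mul_X_pow,
      show ((1 : R⟦X⟧) + X) ^ 2 = 1 + X + X + X ^ 2 by ring]
    ext n
    rcases n with _ | _ | _ | n <;> simp [coeff_X, coeff_X_pow] <;> norm_num
  calc _ = mk f * (1 - C q * X ^ 3) * (1 - X) * (1 - X) ^ 2 := by ring
    _ = (1 - X ^ 2) ^ 2 := by rw [step₁, step₂]; ring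

def diffHom (n : ℕ) : (Fin (n + 1) → ℤ) →+ (Fin n → ℤ) where
  toFun x i := x i.castSucc - x (Fin.last n)
  map_zero' := by ext; simp
  map_add' x y := by ext; simp; ring

namespace diffHom
variable {n : ℕ}

theorem surjective : Function.Surjective (diffHom n) :=
  fun y => ⟨Fin.snoc y 0, by ext i; simp [diffHom]⟩

theorem map_one : diffHom n 1 = 0 := by ext; simp [diffHom]

theorem map_mul (x y : Fin (n + 1) → ℤ) :
    diffHom n (x * y) = x (Fin.last n) • diffHom n y + y (Fin.last n) • diffHom n x +
      diffHom n x * diffHom n y := by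
  ext i; simp [diffHom]; ring

theorem ker_le (S : Subring (Fin (n + 1) → ℤ)) : (diffHom n).ker ≤ S.toAddSubgroup := by
  intro x hx
  have hx : x = x (Fin.last n) • (1 : Fin (n + 1) → ℤ) := by
    ext i
    refine Fin.lastCases ?_ (fun i => ?_) i
    · simp
    · simpa [diffHom, sub_eq_zero] using congrFun hx i
  rw [hx]
  exact S.toAddSubgroup.zsmul_mem S.one_mem _

end diffHom

def Subring.diffImage {n : ℕ} (S : Subring (Fin (n + 1) → ℤ)) : NonUnitalSubring (Fin n → ℤ) :=
  { S.toAddSubgroup.map (diffHom n) with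
    mul_mem' := by
      rintro _ _ ⟨x, hx, rfl⟩ ⟨y, hy, rfl⟩
      refine ⟨x * y - x (Fin.last n) • y - y (Fin.last n) • x, ?_, ?_⟩
      · exact S.sub_mem (S.sub_mem (S.mul_mem hx hy) (S.toAddSubgroup.zsmul_mem hy _))
          (S.toAddSubgroup.zsmul_mem hx _)
      · simp only [map_sub, map_zsmul, diffHom.map_mul]
        abel }

def NonUnitalSubring.diffPreimage {n : ℕ} (L : NonUnitalSubring (Fin n → ℤ)) :
    Subring (Fin (n + 1) → ℤ) :=
  { L.toAddSubgroup.comap (diffHom n) with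
    one_mem' := by simp [diffHom.map_one]
    mul_mem' := fun {x y} hx hy => by
      show diffHom n (x * y) ∈ L
      rw [diffHom.map_mul]
      exact L.add_mem
        (L.add_mem (L.toAddSubgroup.zsmul_mem hy _) (L.toAddSubgroup.zsmul_mem hx _))
        (L.mul_mem hx hy) }

def subringEquivNonUnitalSubring (n : ℕ) :
    Subring (Fin (n + 1) → ℤ) ≃ NonUnitalSubring (Fin n → ℤ) where
  toFun := Subring.diffImage
  invFun := NonUnitalSubring.diffPreimage
  left_inv S := Subring.toAddSubgroup_injective <| by
    show (S.toAddSubgroup.map (diffHom n)).comap (diffHom n) = S.toAddSubgroup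
    rw [AddSubgroup.comap_map_eq, sup_of_le_left (diffHom.ker_le S)]
  right_inv L := NonUnitalSubring.toAddSubgroup_injective <|
    AddSubgroup.map_comap_eq_self_of_surjective diffHom.surjective _

theorem Subring.index_diffImage {n : ℕ} (S : Subring (Fin (n + 1) → ℤ)) :
    S.diffImage.toAddSubgroup.index = S.toAddSubgroup.index :=
  AddSubgroup.index_map_eq _ diffHom.surjective (diffHom.ker_le S)

theorem numSubrings_succ (n k : ℕ) :
    numSubrings (n + 1) k =
      Nat.card {L : NonUnitalSubring (Fin n → ℤ) // L.toAddSubgroup.index = k} :=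
  Nat.card_congr <| (subringEquivNonUnitalSubring n).subtypeEquiv fun S => by
    rw [← Subring.index_diffImage]; rfl

theorem RingEquiv.card_nonUnitalSubring_index_eq {A B : Type*} [NonUnitalRing A]
    [NonUnitalRing B] (e : A ≃+* B) (k : ℕ) :
    Nat.card {L : NonUnitalSubring A // L.toAddSubgroup.index = k} =
      Nat.card {L : NonUnitalSubring B // L.toAddSubgroup.index = k} :=
  Nat.card_congr
    { toFun L := ⟨L.1.comap e.symm, (L.1.toAddSubgroup.index_comap_of_surjective
        (f := (e.symm : B →+ A)) e.symm.surjective).trans L.2⟩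
      invFun L := ⟨L.1.comap e, (L.1.toAddSubgroup.index_comap_of_surjective
        (f := (e : A →+ B)) e.surjective).trans L.2⟩
      left_inv L := by ext; simp
      right_inv L := by ext; simp }

def hnfLattice (d₁ d₂ c : ℤ) : AddSubgroup (ℤ × ℤ) := AddSubgroup.closure {(d₁, c), (0, d₂)}

section hnfLattice
variable {d₁ d₂ c : ℤ}

theorem mem_hnfLattice {z : ℤ × ℤ} :
    z ∈ hnfLattice d₁ d₂ c ↔ ∃ s t : ℤ, z = (s * d₁, s * c + t * d₂) := by
  simp [hnfLattice, AddSubgroup.mem_closure_pair, Prod.ext_iff, eq_comm]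

theorem map_fst_hnfLattice :
    (hnfLattice d₁ d₂ c).map (AddMonoidHom.fst ℤ ℤ) = AddSubgroup.zmultiples d₁ := by
  ext x
  simp only [AddSubgroup.mem_map, mem_hnfLattice, Int.mem_zmultiples_iff, AddMonoidHom.coe_fst]
  constructor
  · rintro ⟨_, ⟨s, t, rfl⟩, rfl⟩
    exact Dvd.intro_left s rfl
  · rintro ⟨s, rfl⟩
    exact ⟨_, ⟨s, 0, rfl⟩, mul_comm _ _⟩

theorem comap_inr_hnfLattice (hd₁ : d₁ ≠ 0) :
    (hnfLattice d₁ d₂ c).comap (AddMonoidHom.inr ℤ ℤ) = AddSubgroup.zmultiples d₂ := by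
  ext y
  simp only [AddSubgroup.mem_comap, AddMonoidHom.inr_apply, mem_hnfLattice, Prod.ext_iff,
    Int.mem_zmultiples_iff]
  constructor
  · rintro ⟨s, t, hs, rfl⟩
    obtain rfl : s = 0 := by simpa [hd₁] using hs.symm
    simp
  · rintro ⟨t, rfl⟩
    exact ⟨0, t, by simp, by ring⟩

theorem index_hnfLattice (hd₁ : d₁ ≠ 0) : (hnfLattice d₁ d₂ c).index = (d₁ * d₂).natAbs := by
  rw [AddSubgroup.index_eq_index_map_fst_mul_index_comap_inr, map_fst_hnfLattice,
    comap_inr_hnfLattice hd₁, Int.index_zmultiples, Int.index_zmultiples, Int.natAbs_mul]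

theorem eq_hnfLattice {H : AddSubgroup (ℤ × ℤ)}
    (h₁ : H.map (AddMonoidHom.fst ℤ ℤ) = AddSubgroup.zmultiples d₁)
    (h₂ : H.comap (AddMonoidHom.inr ℤ ℤ) = AddSubgroup.zmultiples d₂) (hc : (d₁, c) ∈ H) :
    H = hnfLattice d₁ d₂ c := by
  have hd₂ : ((0 : ℤ), d₂) ∈ H := by
    simpa using (h₂.ge (AddSubgroup.mem_zmultiples d₂) : _ ∈ H.comap _)
  refine le_antisymm (fun z hz => ?_) ?_
  · obtain ⟨s, hs⟩ : d₁ ∣ z.1 := by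
      rw [← Int.mem_zmultiples_iff, ← h₁]; exact ⟨z, hz, rfl⟩
    have hrest : z.2 - s * c ∈ H.comap (AddMonoidHom.inr ℤ ℤ) := by
      rw [AddSubgroup.mem_comap]
      convert H.sub_mem hz (H.zsmul_mem hc s) using 1
      ext <;> simp [hs, mul_comm]
    rw [h₂, Int.mem_zmultiples_iff] at hrest
    obtain ⟨t, ht⟩ := hrest
    exact mem_hnfLattice.2 ⟨s, t, Prod.ext (by simp [hs, mul_comm]) (by simp; linarith)⟩
  · rw [hnfLattice, AddSubgroup.closure_le, Set.insert_subset_iff, Set.singleton_subset_iff]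
    exact ⟨hc, hd₂⟩

theorem hnfLattice_mul_mem (h : d₂ ∣ c * (c - d₁)) {x y : ℤ × ℤ} (hx : x ∈ hnfLattice d₁ d₂ c)
    (hy : y ∈ hnfLattice d₁ d₂ c) : x * y ∈ hnfLattice d₁ d₂ c := by
  obtain ⟨e, he⟩ := h
  obtain ⟨s, t, rfl⟩ := mem_hnfLattice.1 hx
  obtain ⟨s', t', rfl⟩ := mem_hnfLattice.1 hy
  refine mem_hnfLattice.2 ⟨s * s' * d₁, s * s' * e + s * t' * c + t * s' * c + t * t' * d₂, ?_⟩
  ext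
  · simp; ring
  · simp; linear_combination s * s' * he

theorem NonUnitalSubring.dvd_mul_sub_of_mem {L : NonUnitalSubring (ℤ × ℤ)}
    (h₂ : L.toAddSubgroup.comap (AddMonoidHom.inr ℤ ℤ) = AddSubgroup.zmultiples d₂)
    (hc : (d₁, c) ∈ L) : d₂ ∣ c * (c - d₁) := by
  rw [← Int.mem_zmultiples_iff, ← h₂, AddSubgroup.mem_comap, NonUnitalSubring.mem_toAddSubgroup]
  convert L.sub_mem (L.mul_mem hc hc) (L.toAddSubgroup.zsmul_mem hc d₁) using 1
  ext <;> simp; ring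

end hnfLattice

def hnfSubring (d₁ d₂ c : ℤ) (h : d₂ ∣ c * (c - d₁)) : NonUnitalSubring (ℤ × ℤ) :=
  { hnfLattice d₁ d₂ c with mul_mem' := hnfLattice_mul_mem h }

theorem toAddSubgroup_hnfSubring (d₁ d₂ c : ℤ) (h : d₂ ∣ c * (c - d₁)) :
    (hnfSubring d₁ d₂ c h).toAddSubgroup = hnfLattice d₁ d₂ c := rfl

theorem hnfLattice_natCast_injective {d₁ d₂ c d₁' d₂' c' : ℕ} (hd₁ : d₁ ≠ 0)
    (hc : c < d₂) (hc' : c' < d₂')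
    (h : hnfLattice d₁ d₂ c = hnfLattice d₁' d₂' c') : d₁ = d₁' ∧ d₂ = d₂' ∧ c = c' := by
  have e₁ : d₁ = d₁' := by
    simpa [map_fst_hnfLattice, Int.index_zmultiples] using
      congrArg (fun H => (H.map (AddMonoidHom.fst ℤ ℤ)).index) h
  subst e₁
  have e₂ : d₂ = d₂' := by
    simpa [comap_inr_hnfLattice (Int.natCast_ne_zero.2 hd₁), Int.index_zmultiples] using
      congrArg (fun H => (H.comap (AddMonoidHom.inr ℤ ℤ)).index) h
  subst e₂
  have hmem : ((d₁ : ℤ), (c : ℤ)) ∈ hnfLattice d₁ d₂ c' :=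
    h ▸ mem_hnfLattice.2 ⟨1, 0, by simp⟩
  obtain ⟨s, t, hst⟩ := mem_hnfLattice.1 hmem
  obtain ⟨hs, ht⟩ := Prod.ext_iff.1 hst
  obtain rfl : s = 1 := mul_right_cancel₀ (Int.natCast_ne_zero.2 hd₁) (by simpa using hs.symm)
  refine ⟨rfl, rfl, Nat.ModEq.eq_of_lt_of_lt ((Nat.modEq_iff_dvd ..).2 ⟨-t, ?_⟩) hc hc'⟩
  simp only at ht
  linarith

theorem exists_eq_hnfLattice (L : NonUnitalSubring (ℤ × ℤ)) (hL : L.toAddSubgroup.index ≠ 0) :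
    ∃ d₁ d₂ c : ℕ, d₁ * d₂ = L.toAddSubgroup.index ∧ c < d₂ ∧ (d₂ : ℤ) ∣ c * (c - d₁) ∧
      L.toAddSubgroup = hnfLattice d₁ d₂ c := by
  set d₁ := (L.toAddSubgroup.map (AddMonoidHom.fst ℤ ℤ)).index
  set d₂ := (L.toAddSubgroup.comap (AddMonoidHom.inr ℤ ℤ)).index
  have hidx : d₁ * d₂ = L.toAddSubgroup.index :=
    (AddSubgroup.index_eq_index_map_fst_mul_index_comap_inr _).symm
  have hd₂ : 0 < d₂ := Nat.pos_of_ne_zero (right_ne_zero_of_mul (hidx ▸ hL))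
  have h₁ := Int.addSubgroup_eq_zmultiples_index (L.toAddSubgroup.map (AddMonoidHom.fst ℤ ℤ))
  have h₂ := Int.addSubgroup_eq_zmultiples_index (L.toAddSubgroup.comap (AddMonoidHom.inr ℤ ℤ))
  obtain ⟨⟨x, y⟩, hxy, rfl : x = d₁⟩ := h₁.ge (AddSubgroup.mem_zmultiples _)
  have hc : ((d₁ : ℤ), y % d₂) ∈ L := by
    have hd₂L : ((0 : ℤ), (d₂ : ℤ)) ∈ L := h₂.ge (AddSubgroup.mem_zmultiples _)
    convert L.sub_mem hxy (L.toAddSubgroup.zsmul_mem hd₂L (y / d₂)) using 1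
    ext <;> simp [Int.emod_def, mul_comm]
  lift y % d₂ to ℕ using Int.emod_nonneg _ (by positivity) with c hc'
  refine ⟨d₁, d₂, c, hidx, ?_, NonUnitalSubring.dvd_mul_sub_of_mem h₂ hc, eq_hnfLattice h₁ h₂ hc⟩
  have := Int.emod_lt_of_pos y (Int.natCast_pos.2 hd₂)
  omega

def offDiagCount (d e : ℕ) : ℕ := Nat.count (fun c : ℕ => (e : ℤ) ∣ c * (c - d)) e

/-- `⟨d₁, c⟩` stands for the lattice with Hermite basis `(d₁, c), (0, m / d₁)`. -/
def hnfParams (m : ℕ) : Finset (Σ _ : ℕ, ℕ) :=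
  m.divisors.sigma fun d => {c ∈ range (m / d) | ((m / d : ℕ) : ℤ) ∣ c * (c - d)}

theorem mem_hnfParams {m : ℕ} {x : Σ _ : ℕ, ℕ} :
    x ∈ hnfParams m ↔
      (x.1 ∣ m ∧ m ≠ 0) ∧ x.2 < m / x.1 ∧ ((m / x.1 : ℕ) : ℤ) ∣ x.2 * (x.2 - x.1) := by
  simp [hnfParams]

noncomputable def hnfParamsEquiv {m : ℕ} (hm : m ≠ 0) :
    hnfParams m ≃ {L : NonUnitalSubring (ℤ × ℤ) // L.toAddSubgroup.index = m} :=
  Equiv.ofBijective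
    (fun x => ⟨hnfSubring x.1.1 (m / x.1.1 : ℕ) x.1.2 (mem_hnfParams.1 x.2).2.2, by
      obtain ⟨⟨hdm, hm⟩, -⟩ := mem_hnfParams.1 x.2
      rw [toAddSubgroup_hnfSubring,
        index_hnfLattice (by exact_mod_cast ne_zero_of_dvd_ne_zero hm hdm), ← Nat.cast_mul,
        Int.natAbs_natCast, Nat.mul_div_cancel' hdm]⟩)
    ⟨fun ⟨⟨d, c⟩, hx⟩ ⟨⟨d', c'⟩, hx'⟩ h => by
      obtain ⟨⟨hdm, hm⟩, hc, -⟩ := mem_hnfParams.1 hx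
      obtain ⟨-, hc', -⟩ := mem_hnfParams.1 hx'
      obtain ⟨rfl, -, rfl⟩ := hnfLattice_natCast_injective (ne_zero_of_dvd_ne_zero hm hdm) hc hc'
        (congrArg (fun L => L.1.toAddSubgroup) h)
      rfl,
    fun ⟨L, hL⟩ => by
      obtain ⟨d₁, d₂, c, hidx, hc, hdvd, hLeq⟩ := exists_eq_hnfLattice L (hL ▸ hm)
      rw [hL] at hidx
      have hd₁ : d₁ ≠ 0 := left_ne_zero_of_mul (hidx ▸ hm)
      obtain rfl : d₂ = m / d₁ :=
        (Nat.div_eq_of_eq_mul_right (Nat.pos_of_ne_zero hd₁) hidx.symm).symm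
      refine ⟨⟨⟨d₁, c⟩, mem_hnfParams.2 ⟨⟨Dvd.intro _ hidx, hm⟩, hc, hdvd⟩⟩,
        Subtype.ext (NonUnitalSubring.toAddSubgroup_injective ?_)⟩
      exact hLeq.symm⟩

theorem card_nonUnitalSubring_index {m : ℕ} (hm : m ≠ 0) :
    Nat.card {L : NonUnitalSubring (ℤ × ℤ) // L.toAddSubgroup.index = m} =
      ∑ d ∈ m.divisors, offDiagCount d (m / d) := by
  rw [← Nat.card_congr (hnfParamsEquiv hm), Nat.card_eq_finsetCard]
  simp [hnfParams, offDiagCount, Nat.count_eq_card_filter_range]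

section PrimePower
variable {p : ℕ}

theorem offDiagCount_periodic (d e : ℕ) :
    Function.Periodic (fun c : ℕ => (e : ℤ) ∣ c * (c - d)) e := fun c => by
  have : ((c + e : ℕ) : ℤ) * ((c + e : ℕ) - d) = c * (c - d) + e * (2 * c + e - d) := by
    push_cast; ring
  simp only [this, dvd_add_left (dvd_mul_right _ _)]

theorem offDiagCount_one_right (d : ℕ) : offDiagCount d 1 = 1 := by
  simp [offDiagCount]

theorem offDiagCount_prime_mul_pow (hp : p.Prime) (d e : ℕ) :
    offDiagCount (p * d) (p ^ 2 * e) = p * offDiagCount d e := by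
  set P := fun c : ℕ => ((p ^ 2 * e : ℕ) : ℤ) ∣ c * (c - (p * d : ℕ))
  have hp_dvd : (p : ℤ) ∣ ((p ^ 2 * e : ℕ) : ℤ) := by
    push_cast; exact dvd_mul_of_dvd_left (dvd_pow_self _ two_ne_zero) _
  have hdvd : ∀ c, P c → p ∣ c := fun c hc =>
    Int.natCast_dvd_natCast.1 <| (Nat.prime_iff_prime_int.mp hp).dvd_of_dvd_mul_sub
      (by push_cast; exact dvd_mul_right _ _) (hp_dvd.trans hc)
  have hcancel : ∀ c : ℕ, ((p ^ 2 * e : ℕ) : ℤ) ∣ (p * c : ℕ) * ((p * c : ℕ) - (p * d : ℕ)) ↔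
      (e : ℤ) ∣ c * (c - d) := fun c => by
    have hp0 : ((p : ℤ) ^ 2) ≠ 0 := pow_ne_zero _ (by exact_mod_cast hp.ne_zero)
    rw [show ((p * c : ℕ) : ℤ) * ((p * c : ℕ) - (p * d : ℕ)) = p ^ 2 * (c * (c - d)) by
      push_cast; ring, Nat.cast_mul, Nat.cast_pow, mul_dvd_mul_iff_left hp0]
  calc Nat.count P (p ^ 2 * e) = Nat.count P (p * (e * p)) := congrArg _ (by ring)
    _ = Nat.count (fun c : ℕ => (e : ℤ) ∣ c * (c - d)) (e * p) := by
      rw [Nat.count_mul_of_dvd hp.pos hdvd]; simp only [P, hcancel]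
    _ = p * offDiagCount d e := Nat.count_mul_of_periodic (offDiagCount_periodic d e) p

theorem offDiagCount_prime_of_dvd (hp : p.Prime) {d : ℕ} (hd : p ∣ d) :
    offDiagCount d p = 1 := by
  set P := fun c : ℕ => (p : ℤ) ∣ c * (c - d)
  have hdvd : ∀ c, P c → p ∣ c := fun c hc =>
    Int.natCast_dvd_natCast.1 <| (Nat.prime_iff_prime_int.mp hp).dvd_of_dvd_mul_sub
      (Int.natCast_dvd_natCast.2 hd) hc
  calc Nat.count P p = Nat.count P (p * 1) := congrArg _ (mul_one p).symm
    _ = Nat.count (fun c => P (p * c)) 1 := Nat.count_mul_of_dvd hp.pos hdvd 1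
    _ = 1 := by simp [P, Nat.count_succ]

theorem offDiagCount_one_left (hp : p.Prime) (b : ℕ) : offDiagCount 1 (p ^ (b + 1)) = 2 := by
  have hp' := Nat.prime_iff_prime_int.mp hp
  set q := p ^ (b + 1)
  have hq : 1 < q := Nat.one_lt_pow b.succ_ne_zero hp.one_lt
  have hqz : (q : ℤ) = (p : ℤ) ^ (b + 1) := by push_cast [q]; rfl
  have hroots : (range q).filter (fun c : ℕ => (q : ℤ) ∣ c * (c - (1 : ℕ))) = {0, 1} := by
    ext c
    simp only [mem_filter, mem_range, mem_insert, mem_singleton, Nat.cast_one]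
    refine ⟨fun ⟨hc, hdvd⟩ => ?_, ?_⟩
    · rw [hqz] at hdvd
      by_cases hpc : (p : ℤ) ∣ c
      · have hpc' : ¬(p : ℤ) ∣ c - 1 := fun h => hp'.not_dvd_one (by simpa using dvd_sub hpc h)
        have h := hp'.pow_dvd_of_dvd_mul_right _ hpc' hdvd
        rw [← hqz] at h
        exact Or.inl (Nat.eq_zero_of_dvd_of_lt (Int.natCast_dvd_natCast.1 h) hc)
      · have h := hp'.pow_dvd_of_dvd_mul_left _ hpc hdvd
        rw [← hqz] at h
        have hc0 : c ≠ 0 := by rintro rfl; simp at hpc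
        have := Int.eq_zero_of_abs_lt_dvd h (abs_lt.2 ⟨by omega, by omega⟩)
        omega
    · rintro (rfl | rfl) <;> simp [hq, pos_of_gt hq]
  rw [offDiagCount, Nat.count_eq_card_filter_range, hroots]
  rfl

theorem numSubrings_three_prime_pow (hp : p.Prime) (k : ℕ) :
    numSubrings 3 (p ^ k) = ∑ a ∈ range (k + 1), offDiagCount (p ^ a) (p ^ (k - a)) := by
  rw [numSubrings_succ, (RingEquiv.piFinTwo fun _ => ℤ).card_nonUnitalSubring_index_eq,
    card_nonUnitalSubring_index (pow_ne_zero _ hp.ne_zero), Nat.divisors_prime_pow hp, sum_map]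
  refine sum_congr rfl fun a ha => ?_
  rw [Function.Embedding.coeFn_mk, Nat.pow_div (by simpa [Nat.lt_succ_iff] using ha) hp.pos]

theorem numSubrings_three_one : numSubrings 3 1 = 1 := by
  simpa [offDiagCount_one_right] using numSubrings_three_prime_pow Nat.prime_two 0

theorem numSubrings_three_prime (hp : p.Prime) : numSubrings 3 p = 3 := by
  have h := offDiagCount_one_left hp 0
  rw [zero_add, pow_one] at h
  simpa [sum_range_succ, offDiagCount_one_right, h] using numSubrings_three_prime_pow hp 1

theorem numSubrings_three_prime_sq (hp : p.Prime) : numSubrings 3 (p ^ 2) = 4 := by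
  simpa [sum_range_succ, offDiagCount_one_right, offDiagCount_one_left hp 1,
    offDiagCount_prime_of_dvd hp dvd_rfl] using numSubrings_three_prime_pow hp 2

theorem numSubrings_three_prime_pow_add_three (hp : p.Prime) (k : ℕ) :
    numSubrings 3 (p ^ (k + 3)) = p * numSubrings 3 (p ^ k) + 4 := by
  have hinner : ∀ a ∈ range (k + 1), offDiagCount (p ^ (a + 1)) (p ^ (k + 3 - (a + 1))) =
      p * offDiagCount (p ^ a) (p ^ (k - a)) := fun a ha => by
      rw [show k + 3 - (a + 1) = 2 + (k - a) by simp at ha; omega, pow_add _ 2, pow_succ' p a,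
        offDiagCount_prime_mul_pow hp]
  -- split off the terms `a = 0`, `a = k + 2` and `a = k + 3`
  rw [numSubrings_three_prime_pow hp, numSubrings_three_prime_pow hp, sum_range_succ',
    sum_range_succ, sum_range_succ, sum_congr rfl hinner, ← mul_sum,
    show k + 3 - (k + 2) = 1 by omega, pow_one,
    offDiagCount_prime_of_dvd hp (dvd_pow_self p (by omega)), Nat.sub_self, pow_zero,
    offDiagCount_one_right, Nat.sub_zero, offDiagCount_one_left hp (k + 2)]

end PrimePower

open PowerSeries in
theorem zeta_Z3_local (p : ℕ) (hp : p.Prime) :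
    (PowerSeries.mk fun k => (numSubrings 3 (p ^ k) : ℤ)) *
        (1 - PowerSeries.C (p : ℤ) * PowerSeries.X ^ 3) *
        (1 - PowerSeries.X) ^ 3 =
      (1 - PowerSeries.X ^ 2) ^ 2 := by
  refine mk_mul_eq_of_recurrence ?_ ?_ ?_ fun k => ?_
  · simp [numSubrings_three_one]
  · simp [numSubrings_three_prime hp]
  · simp [numSubrings_three_prime_sq hp]
  · simp [numSubrings_three_prime_pow_add_three hp]
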